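/- Let (X,d) be a geodesic metric space with the following geodesic stability property: for every λ ≥ 1 and S > 0 there exists H(λ,S) > 0 such that every (λ,S)-quasi-geodesic γ: [a,b] → X has image within Hausdorff distance H(λ,S) of the image of every geodesic segment joining γ(a) to γ(b). Then X is Gromov hyperbolic; i.e., there exists δ ≥ 0 such that X is δ-thin-hyperbolic. -/

import Mathlib

/-- `γ` is a geodesic segment from `x` to `y`, parametrized by arclength on `[0, dist x y]`. -/
def IsGeodesicSegment {X : Type*} [MetricSpace X] (γ : ℝ → X) (x y : X) : Prop :=
  γ 0 = x ∧ γ (dist x y) = y ∧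
    ∀ s ∈ Set.Icc (0 : ℝ) (dist x y), ∀ t ∈ Set.Icc (0 : ℝ) (dist x y),
      dist (γ s) (γ t) = |s - t|

/-- A metric space is geodesic if any two points are joined by a geodesic segment. -/
def GeodesicSpace (X : Type*) [MetricSpace X] : Prop :=
  ∀ x y : X, ∃ γ : ℝ → X, IsGeodesicSegment γ x y

/-- `X` is `δ`-thin-hyperbolic: for every geodesic triangle, each point on any one of the
three sides lies within distance `δ` of the union of the other two sides. -/
def ThinTriangles (X : Type*) [MetricSpace X] (δ : ℝ) : Prop :=
  ∀ (a b c : X) (γab γbc γca : ℝ → X),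
    IsGeodesicSegment γab a b → IsGeodesicSegment γbc b c → IsGeodesicSegment γca c a →
    (∀ s ∈ Set.Icc (0 : ℝ) (dist a b),
      Metric.infDist (γab s) (γbc '' Set.Icc 0 (dist b c) ∪ γca '' Set.Icc 0 (dist c a)) ≤ δ) ∧
    (∀ s ∈ Set.Icc (0 : ℝ) (dist b c),
      Metric.infDist (γbc s) (γab '' Set.Icc 0 (dist a b) ∪ γca '' Set.Icc 0 (dist c a)) ≤ δ) ∧
    (∀ s ∈ Set.Icc (0 : ℝ) (dist c a),
      Metric.infDist (γca s) (γab '' Set.Icc 0 (dist a b) ∪ γbc '' Set.Icc 0 (dist b c)) ≤ δ)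

/-- `γ` restricted to `[a, b]` is a `(λ, S)`-quasi-geodesic:
`λ⁻¹|s−t| − S ≤ d(γ s, γ t) ≤ λ|s−t| + S` for all `s, t ∈ [a, b]`. -/
def IsQuasiGeodesicOn {X : Type*} [MetricSpace X] (lam S : ℝ) (γ : ℝ → X) (a b : ℝ) : Prop :=
  ∀ s ∈ Set.Icc a b, ∀ t ∈ Set.Icc a b,
    lam⁻¹ * |s - t| - S ≤ dist (γ s) (γ t) ∧ dist (γ s) (γ t) ≤ lam * |s - t| + S

/-!
Let `α` and `β` be the sides issuing from `c`, towards `a` and `b`, and let `H₁` be the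
stability constant of `(7, 1)`-quasi-geodesics. Let `τ` be the last time at which `β` is
`H₁`-close to `α`. Beyond `τ` the two sides diverge linearly: at a first time `u` where this
fails, going along `β` to `β u` and then along a geodesic to a nearest point of `α` is a
`(7, 1)`-quasi-geodesic, so stability would make `β u` `H₁`-close to `α`. Hence the path from
`a` back along `α` to the point nearest to `β τ`, across a bridge of length at most `H₁`, and
on along `β` to `b` is a `(7, H₁)`-quasi-geodesic. If `H₂` is the stability constant of such
paths, the side from `a` to `b` is within `H₂` of this one, hence within `H₂ + H₁` of the other
two sides.
-/

open Metric Set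

section

variable {X : Type*} [MetricSpace X]

namespace IsGeodesicSegment

variable {γ : ℝ → X} {x y : X} {s t : ℝ}

theorem dist_eq (h : IsGeodesicSegment γ x y) (hs : s ∈ Icc 0 (dist x y))
    (ht : t ∈ Icc 0 (dist x y)) : dist (γ s) (γ t) = |s - t| :=
  h.2.2 s hs t ht

theorem dist_left (h : IsGeodesicSegment γ x y) (hs : s ∈ Icc 0 (dist x y)) :
    dist x (γ s) = s := by
  rw [← h.1, h.dist_eq ⟨le_rfl, dist_nonneg⟩ hs, zero_sub, abs_neg, abs_of_nonneg hs.1]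

theorem dist_add_dist_eq (h : IsGeodesicSegment γ x y) (hs : s ∈ Icc 0 (dist x y)) :
    dist x (γ s) + dist (γ s) y = dist x y := by
  conv_lhs => rw [← h.2.1]
  rw [h.dist_left hs, h.dist_eq hs ⟨dist_nonneg, le_rfl⟩, abs_of_nonpos (by linarith [hs.2])]
  ring

theorem dist_sub_eq (h : IsGeodesicSegment γ x y) {k : ℝ} (hs : s - k ∈ Icc 0 (dist x y))
    (ht : t - k ∈ Icc 0 (dist x y)) : dist (γ (s - k)) (γ (t - k)) = |s - t| := by
  rw [h.dist_eq hs ht, sub_sub_sub_cancel_right]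

theorem dist_const_sub_eq (h : IsGeodesicSegment γ x y) {k : ℝ} (hs : k - s ∈ Icc 0 (dist x y))
    (ht : k - t ∈ Icc 0 (dist x y)) : dist (γ (k - s)) (γ (k - t)) = |s - t| := by
  rw [h.dist_eq hs ht, sub_sub_sub_cancel_left, abs_sub_comm]

theorem continuousOn (h : IsGeodesicSegment γ x y) : ContinuousOn γ (Icc 0 (dist x y)) :=
  (LipschitzOnWith.mk_one fun s hs t ht => by
    rw [h.dist_eq hs ht, Real.dist_eq]).continuousOn

theorem isCompact_image (h : IsGeodesicSegment γ x y) : IsCompact (γ '' Icc 0 (dist x y)) :=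
  isCompact_Icc.image_of_continuousOn h.continuousOn

theorem left_mem_image (h : IsGeodesicSegment γ x y) : x ∈ γ '' Icc 0 (dist x y) :=
  ⟨0, ⟨le_rfl, dist_nonneg⟩, h.1⟩

theorem restrict (h : IsGeodesicSegment γ x y) {w : ℝ} (hw : w ∈ Icc 0 (dist x y)) :
    IsGeodesicSegment γ x (γ w) := by
  have hxw : dist x (γ w) = w := h.dist_left hw
  refine ⟨h.1, by rw [hxw], fun s hs t ht => ?_⟩
  rw [hxw] at hs ht
  exact h.dist_eq ⟨hs.1, hs.2.trans hw.2⟩ ⟨ht.1, ht.2.trans hw.2⟩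

theorem reverse (h : IsGeodesicSegment γ x y) :
    IsGeodesicSegment (fun t => γ (dist x y - t)) y x := by
  refine ⟨by simpa using h.2.1, by simpa [dist_comm y x] using h.1, fun s hs t ht => ?_⟩
  rw [dist_comm y x] at hs ht
  exact h.dist_const_sub_eq ⟨by linarith [hs.2], by linarith [hs.1]⟩
    ⟨by linarith [ht.2], by linarith [ht.1]⟩

/-- Two geodesics issuing from the same point are parametrized by the distance to it. -/
theorem abs_sub_le_dist {β : ℝ → X} {z : X} (h : IsGeodesicSegment γ x y)
    (hβ : IsGeodesicSegment β x z) (hs : s ∈ Icc 0 (dist x y)) (ht : t ∈ Icc 0 (dist x z)) :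
    |s - t| ≤ dist (γ s) (β t) := by
  have := abs_dist_sub_le (γ s) (β t) x
  rwa [dist_comm (γ s), dist_comm (β t), h.dist_left hs, hβ.dist_left ht] at this

end IsGeodesicSegment

theorem image_comp_const_sub_Icc {α : Type*} (γ : ℝ → α) (d : ℝ) :
    (fun t => γ (d - t)) '' Icc 0 d = γ '' Icc 0 d := by
  rw [← Function.comp_def γ, image_comp, image_const_sub_Icc, sub_self, sub_zero]

namespace IsQuasiGeodesicOn

variable {lam S p q : ℝ} {γ : ℝ → X}

theorem of_forall_le
    (h : ∀ s ∈ Icc p q, ∀ t ∈ Icc p q, s ≤ t →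
      lam⁻¹ * (t - s) - S ≤ dist (γ s) (γ t) ∧ dist (γ s) (γ t) ≤ lam * (t - s) + S) :
    IsQuasiGeodesicOn lam S γ p q := by
  intro s hs t ht
  rcases le_total s t with hst | hts
  · rw [abs_sub_comm, abs_of_nonneg (sub_nonneg.2 hst)]
    exact h s hs t ht hst
  · rw [abs_of_nonneg (sub_nonneg.2 hts), dist_comm]
    exact h t ht s hs hts

theorem isBounded_image (h : IsQuasiGeodesicOn lam S γ p q) :
    Bornology.IsBounded (γ '' Icc p q) := by
  refine isBounded_iff.2 ⟨|lam| * (q - p) + S, ?_⟩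
  rintro _ ⟨s, hs, rfl⟩ _ ⟨t, ht, rfl⟩
  have hst : |s - t| ≤ q - p :=
    abs_sub_le_iff.2 ⟨by linarith [hs.2, ht.1], by linarith [hs.1, ht.2]⟩
  have : lam * |s - t| ≤ |lam| * (q - p) :=
    (mul_le_mul_of_nonneg_right (le_abs_self lam) (abs_nonneg _)).trans
      (mul_le_mul_of_nonneg_left hst (abs_nonneg _))
  linarith [(h s hs t ht).2]

end IsQuasiGeodesicOn

theorem inv_mul_sub_le_and_le_mul_add {lam S d x : ℝ} (hlam : 1 ≤ lam) (hx : 0 ≤ x)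
    (hupper : d ≤ x + S) (hlower : x ≤ lam * (d + S)) :
    lam⁻¹ * x - S ≤ d ∧ d ≤ lam * x + S := by
  refine ⟨?_, by nlinarith⟩
  have : lam⁻¹ * x ≤ d + S := (inv_mul_le_iff₀ (by linarith)).2 hlower
  linarith

theorem isQuasiGeodesicOn_of_dist_eq {lam S p q : ℝ} {γ : ℝ → X} (hlam : 1 ≤ lam) (hS : 0 ≤ S)
    (h : ∀ s ∈ Icc p q, ∀ t ∈ Icc p q, dist (γ s) (γ t) = |s - t|) :
    IsQuasiGeodesicOn lam S γ p q := by
  refine IsQuasiGeodesicOn.of_forall_le fun s hs t ht hst => ?_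
  rw [h s hs t ht, abs_sub_comm, abs_of_nonneg (sub_nonneg.2 hst)]
  exact inv_mul_sub_le_and_le_mul_add hlam (sub_nonneg.2 hst) (by linarith) (by nlinarith)

theorem isQuasiGeodesicOn_piecewise {γ₁ γ₂ : ℝ → X} {lam S p m q : ℝ} (hlam : 1 ≤ lam)
    (h₁ : IsQuasiGeodesicOn lam S γ₁ p m) (h₂ : IsQuasiGeodesicOn lam S γ₂ m q)
    (hcross : ∀ s ∈ Icc p m, ∀ t ∈ Ioc m q,
      dist (γ₁ s) (γ₂ t) ≤ t - s + S ∧ t - s ≤ lam * (dist (γ₁ s) (γ₂ t) + S)) :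
    IsQuasiGeodesicOn lam S ((Iic m).piecewise γ₁ γ₂) p q := by
  refine IsQuasiGeodesicOn.of_forall_le fun s hs t ht hst => ?_
  have habs : |s - t| = t - s := by rw [abs_sub_comm, abs_of_nonneg (sub_nonneg.2 hst)]
  by_cases htm : t ≤ m
  · rw [piecewise_eq_of_mem (Iic m) γ₁ γ₂ (hst.trans htm),
      piecewise_eq_of_mem (Iic m) γ₁ γ₂ htm, ← habs]
    exact h₁ s ⟨hs.1, hst.trans htm⟩ t ⟨ht.1, htm⟩
  by_cases hsm : s ≤ m
  · rw [piecewise_eq_of_mem (Iic m) γ₁ γ₂ hsm, piecewise_eq_of_notMem (Iic m) γ₁ γ₂ htm]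
    obtain ⟨hupper, hlower⟩ := hcross s ⟨hs.1, hsm⟩ t ⟨not_le.1 htm, ht.2⟩
    exact inv_mul_sub_le_and_le_mul_add hlam (sub_nonneg.2 hst) hupper hlower
  · rw [piecewise_eq_of_notMem (Iic m) γ₁ γ₂ hsm, piecewise_eq_of_notMem (Iic m) γ₁ γ₂ htm,
      ← habs]
    exact h₂ s ⟨(not_le.1 hsm).le, hs.2⟩ t ⟨(not_le.1 htm).le, ht.2⟩

theorem piecewise_Iic_eq_right {α : Type*} {γ₁ γ₂ : ℝ → α} {m t : ℝ} (hm : γ₁ m = γ₂ m)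
    (ht : m ≤ t) : (Iic m).piecewise γ₁ γ₂ t = γ₂ t := by
  rcases ht.eq_or_lt with rfl | hlt
  · rwa [piecewise_eq_of_mem (Iic m) γ₁ γ₂ (mem_Iic.2 le_rfl)]
  · exact piecewise_eq_of_notMem (Iic m) γ₁ γ₂ (not_le.2 hlt)

/-- If `q` lies between `m` and `z`, and `p` approaches `z` at most half as fast as it
leaves `m`, then the broken path `p, m, q` is a `7`-quasi-geodesic. -/
theorem dist_add_dist_le_seven_mul {p m q z : X} (hq : dist m q + dist q z = dist m z)
    (hp : dist m z ≤ dist p z + dist p m / 2) :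
    dist p m + dist m q ≤ 7 * dist p q := by
  linarith [dist_triangle p q z, dist_triangle p q m, dist_comm q m]

theorem dist_le_and_le_of_short_leg {p m q : X} {s k t H : ℝ} (hpm : dist p m = k - s)
    (hmq : dist m q = t - k) (hshort : k - s ≤ H ∨ t - k ≤ H) :
    dist p q ≤ t - s + H ∧ t - s ≤ 7 * (dist p q + H) := by
  have h₁ := dist_triangle p m q
  have h₂ : dist p m ≤ dist p q + dist m q := by simpa [dist_comm q m] using dist_triangle p q m
  have h₃ : dist m q ≤ dist p m + dist p q := by simpa [dist_comm m p] using dist_triangle m p q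
  rcases hshort with h | h <;> constructor <;> linarith [dist_nonneg (x := p) (y := q)]

theorem infDist_le_add_of_forall_mem {x : X} {A B : Set X} {r r' : ℝ} (hA : A.Nonempty)
    (hx : infDist x A ≤ r) (hB : ∀ z ∈ A, infDist z B ≤ r') : infDist x B ≤ r + r' := by
  refine le_of_forall_pos_le_add fun ε hε => ?_
  obtain ⟨z, hz, hxz⟩ := (infDist_lt_iff hA).1 (show infDist x A < r + ε by linarith)
  linarith [infDist_le_infDist_add_dist (x := x) (y := z) (s := B), hB z hz]

def QuasiGeodesicsStable (X : Type*) [MetricSpace X] (lam S H : ℝ) : Prop :=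
  ∀ (a b : ℝ) (γ : ℝ → X), IsQuasiGeodesicOn lam S γ a b →
    ∀ g : ℝ → X, IsGeodesicSegment g (γ a) (γ b) →
      hausdorffDist (γ '' Icc a b) (g '' Icc 0 (dist (γ a) (γ b))) ≤ H

namespace QuasiGeodesicsStable

variable {lam S H p q : ℝ} {γ g : ℝ → X} {x y : X}

theorem hausdorffEDist_ne_top (hγ : IsQuasiGeodesicOn lam S γ p q) (hpq : p ≤ q)
    (hg : IsGeodesicSegment g x y) :
    hausdorffEDist (γ '' Icc p q) (g '' Icc 0 (dist x y)) ≠ ⊤ :=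
  hausdorffEDist_ne_top_of_nonempty_of_bounded ⟨γ p, p, ⟨le_rfl, hpq⟩, rfl⟩ ⟨x, hg.left_mem_image⟩
    hγ.isBounded_image hg.isCompact_image.isBounded

theorem infDist_geodesic_le (hst : QuasiGeodesicsStable X lam S H)
    (hγ : IsQuasiGeodesicOn lam S γ p q)
    (hp : γ p = x) (hq : γ q = y) (hg : IsGeodesicSegment g x y) {s : ℝ} (hs : s ∈ Icc p q) :
    infDist (γ s) (g '' Icc 0 (dist x y)) ≤ H := by
  subst hp hq
  exact (infDist_le_hausdorffDist_of_mem (mem_image_of_mem γ hs)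
    (hausdorffEDist_ne_top hγ (hs.1.trans hs.2) hg)).trans (hst p q γ hγ g hg)

theorem infDist_quasiGeodesic_le (hst : QuasiGeodesicsStable X lam S H)
    (hγ : IsQuasiGeodesicOn lam S γ p q) (hpq : p ≤ q) (hp : γ p = x) (hq : γ q = y)
    (hg : IsGeodesicSegment g x y) {u : ℝ} (hu : u ∈ Icc 0 (dist x y)) :
    infDist (g u) (γ '' Icc p q) ≤ H := by
  subst hp hq
  refine (infDist_le_hausdorffDist_of_mem (mem_image_of_mem g hu) ?_).trans ?_
  · rw [hausdorffEDist_comm]; exact hausdorffEDist_ne_top hγ hpq hg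
  · rw [hausdorffDist_comm]; exact hst p q γ hγ g hg

end QuasiGeodesicsStable

theorem isQuasiGeodesicOn_piecewise_geodesic {x y z : X} {β Γ : ℝ → X} {u S : ℝ}
    (hβ : IsGeodesicSegment β x y) (hu : u ∈ Icc 0 (dist x y))
    (hΓ : IsGeodesicSegment Γ (β u) z)
    (hz : ∀ s ∈ Icc 0 u, dist (β u) z ≤ dist (β s) z + (u - s) / 2) (hS : 0 ≤ S) :
    IsQuasiGeodesicOn 7 S ((Iic u).piecewise β fun t => Γ (t - u)) 0 (u + dist (β u) z) := by
  refine isQuasiGeodesicOn_piecewise (by norm_num)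
    (isQuasiGeodesicOn_of_dist_eq (by norm_num) hS fun s hs t ht =>
      hβ.dist_eq ⟨hs.1, hs.2.trans hu.2⟩ ⟨ht.1, ht.2.trans hu.2⟩)
    (isQuasiGeodesicOn_of_dist_eq (by norm_num) hS fun s hs t ht =>
      hΓ.dist_sub_eq ⟨by linarith [hs.1], by linarith [hs.2]⟩
        ⟨by linarith [ht.1], by linarith [ht.2]⟩) fun s hs t ht => ?_
  have hsu : dist (β s) (β u) = u - s := by
    rw [hβ.dist_eq ⟨hs.1, hs.2.trans hu.2⟩ hu, abs_of_nonpos (by linarith [hs.2]), neg_sub]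
  have hy : t - u ∈ Icc 0 (dist (β u) z) := ⟨by linarith [ht.1], by linarith [ht.2]⟩
  have hut : dist (β u) (Γ (t - u)) = t - u := hΓ.dist_left hy
  have hseven := dist_add_dist_le_seven_mul (hΓ.dist_add_dist_eq hy)
    (by rw [hsu]; exact hz s hs)
  have htri := dist_triangle (β s) (β u) (Γ (t - u))
  rw [hsu, hut] at hseven htri
  constructor <;> linarith

/-- The path that runs back along `α` to `α σ`, crosses the bridge `Γ` of length `g`, and
continues along `β` from `β τ`; `β` keeps its own parametrization. -/
noncomputable def detour (α Γ β : ℝ → X) (σ τ g : ℝ) : ℝ → X :=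
  (Iic τ).piecewise ((Iic (τ - g)).piecewise (fun t => α (σ + (τ - g) - t))
    fun t => Γ (t - (τ - g))) β

section TwoGeodesics

variable {c a b : X} {α β : ℝ → X} {H : ℝ}

theorem exists_last_infDist_le (hα : IsGeodesicSegment α c a) (hβ : IsGeodesicSegment β c b)
    (hH : 0 ≤ H) :
    ∃ τ ∈ Icc 0 (dist c b), infDist (β τ) (α '' Icc 0 (dist c a)) ≤ H ∧
      ∀ u ∈ Icc 0 (dist c b), τ < u → H < infDist (β u) (α '' Icc 0 (dist c a)) := by
  set A := α '' Icc 0 (dist c a)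
  have hclosed : IsClosed {u ∈ Icc 0 (dist c b) | infDist (β u) A ≤ H} :=
    isClosed_Icc.isClosed_le ((continuous_infDist_pt A).comp_continuousOn hβ.continuousOn)
      continuousOn_const
  have h0 : 0 ∈ {u ∈ Icc 0 (dist c b) | infDist (β u) A ≤ H} :=
    ⟨⟨le_rfl, dist_nonneg⟩, by rwa [hβ.1, infDist_zero_of_mem hα.left_mem_image]⟩
  obtain ⟨τ, ⟨hτ, hτH⟩, hlast⟩ :=
    (isCompact_Icc.of_isClosed_subset hclosed (sep_subset _ _)).exists_isGreatest ⟨0, h0⟩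
  refine ⟨τ, hτ, hτH, fun u hu hτu => ?_⟩
  by_contra! huH
  exact (hlast ⟨hu, huH⟩).not_gt hτu

theorem linear_divergence (hgeo : GeodesicSpace X) (hst : QuasiGeodesicsStable X 7 1 H)
    (hH : 0 < H) (hα : IsGeodesicSegment α c a) (hβ : IsGeodesicSegment β c b) {τ : ℝ}
    (hlast : ∀ u ∈ Icc 0 (dist c b), τ < u → H < infDist (β u) (α '' Icc 0 (dist c a))) :
    ∀ u ∈ Icc 0 (dist c b), u - τ - 2 * H ≤ 2 * infDist (β u) (α '' Icc 0 (dist c a)) := by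
  set A := α '' Icc 0 (dist c a)
  by_contra! hfail
  obtain ⟨u₁, hu₁, hu₁fail⟩ := hfail
  have hclosed : IsClosed {u ∈ Icc 0 (dist c b) | 2 * infDist (β u) A ≤ u - τ - 2 * H} :=
    isClosed_Icc.isClosed_le
      (continuousOn_const.mul ((continuous_infDist_pt A).comp_continuousOn hβ.continuousOn))
      (by fun_prop)
  obtain ⟨u, ⟨hu, hufail⟩, hfirst⟩ :=
    (isCompact_Icc.of_isClosed_subset hclosed (sep_subset _ _)).exists_isLeast
      ⟨u₁, hu₁, hu₁fail.le⟩
  have hbefore : ∀ s ∈ Ico 0 u, s - τ - 2 * H < 2 * infDist (β s) A := fun s hs =>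
    not_le.1 fun h => (hfirst ⟨⟨hs.1, hs.2.le.trans hu.2⟩, h⟩).not_gt hs.2
  have huH : H < infDist (β u) A := hlast u hu (by linarith [infDist_nonneg (x := β u) (s := A)])
  obtain ⟨_, ⟨w, hw, rfl⟩, hwu⟩ :=
    hα.isCompact_image.exists_infDist_eq_dist ⟨c, hα.left_mem_image⟩ (β u)
  obtain ⟨Γ, hΓ⟩ := hgeo (β u) (α w)
  have hz : ∀ s ∈ Icc 0 u, dist (β u) (α w) ≤ dist (β s) (α w) + (u - s) / 2 := by
    intro s hs
    rcases hs.2.lt_or_eq with hsu | rfl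
    · linarith [hbefore s ⟨hs.1, hsu⟩, infDist_le_dist_of_mem (x := β s) (mem_image_of_mem α hw)]
    · simp
  have hR0 : ((Iic u).piecewise β fun t => Γ (t - u)) 0 = c := by
    rw [piecewise_eq_of_mem _ _ _ (mem_Iic.2 hu.1), hβ.1]
  have hRend : ((Iic u).piecewise β fun t => Γ (t - u)) (u + dist (β u) (α w)) = α w := by
    rw [piecewise_eq_of_notMem _ _ _ (by rw [mem_Iic]; linarith), add_sub_cancel_left, hΓ.2.1]
  have hclose := hst.infDist_geodesic_le
    (isQuasiGeodesicOn_piecewise_geodesic hβ hu hΓ hz zero_le_one) hR0 hRend (hα.restrict hw)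
    (s := u) ⟨hu.1, by linarith [dist_nonneg (x := β u) (y := α w)]⟩
  rw [piecewise_eq_of_mem _ _ _ (mem_Iic.2 le_rfl), hα.dist_left hw] at hclose
  have hsub : infDist (β u) A ≤ infDist (β u) (α '' Icc 0 w) :=
    infDist_le_infDist_of_subset (image_mono (Icc_subset_Icc_right hw.2))
      ⟨α 0, mem_image_of_mem α ⟨le_rfl, hw.1⟩⟩
  linarith

theorem dist_le_and_le_of_linear_divergence (hα : IsGeodesicSegment α c a)
    (hβ : IsGeodesicSegment β c b) {σ τ : ℝ} (hσ : σ ∈ Icc 0 (dist c a))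
    (hτ : τ ∈ Icc 0 (dist c b)) (hστ : dist (α σ) (β τ) ≤ H)
    (hdiv : ∀ u ∈ Icc 0 (dist c b), u - τ - 2 * H ≤ 2 * infDist (β u) (α '' Icc 0 (dist c a)))
    {s t : ℝ} (hs : s ∈ Icc σ (dist c a)) (ht : t ∈ Ioc τ (dist c b)) :
    dist (α s) (β t) ≤ (s - σ) + dist (α σ) (β τ) + (t - τ) ∧
      (s - σ) + dist (α σ) (β τ) + (t - τ) ≤ 7 * (dist (α s) (β t) + H) := by
  have hs' : s ∈ Icc 0 (dist c a) := ⟨hσ.1.trans hs.1, hs.2⟩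
  have ht' : t ∈ Icc 0 (dist c b) := ⟨hτ.1.trans ht.1.le, ht.2⟩
  have hαs : dist (α s) (α σ) = s - σ := by
    rw [hα.dist_eq hs' hσ, abs_of_nonneg (by linarith [hs.1])]
  have hβt : dist (β τ) (β t) = t - τ := by
    rw [hβ.dist_eq hτ ht', abs_of_nonpos (by linarith [ht.1]), neg_sub]
  have hst := abs_le.1 (hα.abs_sub_le_dist hβ hs' ht')
  have hστ' := abs_le.1 (hα.abs_sub_le_dist hβ hσ hτ)
  have hfar : t - τ - 2 * H ≤ 2 * dist (α s) (β t) := by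
    rw [dist_comm]
    exact (hdiv t ht').trans (by gcongr; exact infDist_le_dist_of_mem (mem_image_of_mem α hs'))
  have htri := dist_triangle4 (α s) (α σ) (β τ) (β t)
  rw [hαs, hβt] at htri
  constructor <;> linarith [dist_nonneg (x := α s) (y := β t)]

theorem isQuasiGeodesicOn_detour (hα : IsGeodesicSegment α c a) (hβ : IsGeodesicSegment β c b)
    {Γ : ℝ → X} {σ τ : ℝ} (hσ : σ ∈ Icc 0 (dist c a)) (hτ : τ ∈ Icc 0 (dist c b))
    (hΓ : IsGeodesicSegment Γ (α σ) (β τ)) (hστ : dist (α σ) (β τ) ≤ H)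
    (hdiv : ∀ u ∈ Icc 0 (dist c b), u - τ - 2 * H ≤ 2 * infDist (β u) (α '' Icc 0 (dist c a))) :
    IsQuasiGeodesicOn 7 H (detour α Γ β σ τ (dist (α σ) (β τ)))
      (σ + (τ - dist (α σ) (β τ)) - dist c a) (dist c b) := by
  set g := dist (α σ) (β τ)
  have hH : 0 ≤ H := dist_nonneg.trans hστ
  have hback : IsQuasiGeodesicOn 7 H ((Iic (τ - g)).piecewise (fun t => α (σ + (τ - g) - t))
      fun t => Γ (t - (τ - g))) (σ + (τ - g) - dist c a) τ := by
    refine isQuasiGeodesicOn_piecewise (by norm_num)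
      (isQuasiGeodesicOn_of_dist_eq (by norm_num) hH fun s hs t ht =>
        hα.dist_const_sub_eq ⟨by linarith [hs.2, hσ.1], by linarith [hs.1]⟩
          ⟨by linarith [ht.2, hσ.1], by linarith [ht.1]⟩)
      (isQuasiGeodesicOn_of_dist_eq (by norm_num) hH fun s hs t ht =>
        hΓ.dist_sub_eq ⟨by linarith [hs.1], by linarith [hs.2]⟩
          ⟨by linarith [ht.1], by linarith [ht.2]⟩) fun s hs t ht => ?_
    refine dist_le_and_le_of_short_leg (m := α σ) (k := τ - g) ?_ ?_ (.inr (by linarith [ht.2]))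
    · rw [hα.dist_eq ⟨by linarith [hs.2, hσ.1], by linarith [hs.1]⟩ hσ,
        abs_of_nonneg (by linarith [hs.2])]
      ring
    · exact hΓ.dist_left ⟨by linarith [ht.1], by linarith [ht.2]⟩
  refine isQuasiGeodesicOn_piecewise (by norm_num) hback
    (isQuasiGeodesicOn_of_dist_eq (by norm_num) hH fun s hs t ht =>
      hβ.dist_eq ⟨hτ.1.trans hs.1, hs.2⟩ ⟨hτ.1.trans ht.1, ht.2⟩) fun s hs t ht => ?_
  rcases le_or_gt s (τ - g) with hsg | hsg
  · rw [piecewise_eq_of_mem (Iic (τ - g)) _ _ hsg]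
    obtain ⟨hupper, hlower⟩ := dist_le_and_le_of_linear_divergence hα hβ hσ hτ hστ hdiv
      (s := σ + (τ - g) - s) ⟨by linarith, by linarith [hs.1]⟩ ht
    constructor <;> linarith
  · rw [piecewise_eq_of_notMem (Iic (τ - g)) _ _ (not_le.2 hsg)]
    refine dist_le_and_le_of_short_leg (m := β τ) (k := τ) ?_ ?_ (.inl (by linarith))
    · have hy : s - (τ - g) ∈ Icc 0 g := ⟨by linarith, by linarith [hs.2]⟩
      linarith [hΓ.dist_add_dist_eq hy, hΓ.dist_left hy]
    · rw [hβ.dist_eq hτ ⟨hτ.1.trans ht.1.le, ht.2⟩, abs_of_nonpos (by linarith [ht.1]), neg_sub]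

theorem detour_left {Γ : ℝ → X} {σ τ g : ℝ} (hα : IsGeodesicSegment α c a) (hσ : σ ≤ dist c a)
    (hg : 0 ≤ g) : detour α Γ β σ τ g (σ + (τ - g) - dist c a) = a := by
  rw [detour, piecewise_eq_of_mem (Iic τ) _ _ (mem_Iic.2 (by linarith)),
    piecewise_eq_of_mem (Iic (τ - g)) _ _ (mem_Iic.2 (by linarith)), sub_sub_cancel, hα.2.1]

theorem detour_right {Γ : ℝ → X} {σ τ t : ℝ} (hΓ : IsGeodesicSegment Γ (α σ) (β τ))
    (ht : τ ≤ t) : detour α Γ β σ τ (dist (α σ) (β τ)) t = β t := by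
  refine piecewise_Iic_eq_right ?_ ht
  rw [piecewise_Iic_eq_right (by rw [sub_self, add_sub_cancel_right, hΓ.1])
    (by linarith [dist_nonneg (x := α σ) (y := β τ)]), sub_sub_cancel, hΓ.2.1]

theorem infDist_detour_le {Γ : ℝ → X} {σ τ t : ℝ} (hσ : σ ∈ Icc 0 (dist c a))
    (hτ : τ ∈ Icc 0 (dist c b)) (hΓ : IsGeodesicSegment Γ (α σ) (β τ))
    (ht : t ∈ Icc (σ + (τ - dist (α σ) (β τ)) - dist c a) (dist c b)) :
    infDist (detour α Γ β σ τ (dist (α σ) (β τ)) t)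
      (β '' Icc 0 (dist c b) ∪ α '' Icc 0 (dist c a)) ≤ dist (α σ) (β τ) := by
  set g := dist (α σ) (β τ)
  have hg : 0 ≤ g := dist_nonneg
  rcases le_or_gt t τ with htτ | htτ
  · rw [detour, piecewise_eq_of_mem (Iic τ) _ _ htτ]
    rcases le_or_gt t (τ - g) with htg | htg
    · rw [piecewise_eq_of_mem (Iic (τ - g)) _ _ htg, infDist_zero_of_mem (.inr
        (mem_image_of_mem α ⟨by linarith [hσ.1], by linarith [ht.1]⟩))]
      exact hg
    · rw [piecewise_eq_of_notMem (Iic (τ - g)) _ _ (not_le.2 htg)]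
      have hy : t - (τ - g) ∈ Icc 0 g := ⟨by linarith, by linarith⟩
      refine (infDist_le_dist_of_mem (.inr (mem_image_of_mem α hσ))).trans ?_
      linarith [hΓ.dist_add_dist_eq hy, hΓ.dist_left hy, dist_comm (α σ) (Γ (t - (τ - g)))]
  · rw [detour_right hΓ htτ.le, infDist_zero_of_mem (.inl (mem_image_of_mem β
      ⟨hτ.1.trans htτ.le, ht.2⟩))]
    exact hg

theorem infDist_le_add_of_quasiGeodesicsStable {H₁ H₂ : ℝ} (hgeo : GeodesicSpace X)
    (hst₁ : QuasiGeodesicsStable X 7 1 H₁) (hH₁ : 0 < H₁)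
    (hst₂ : QuasiGeodesicsStable X 7 H₁ H₂) (hα : IsGeodesicSegment α c a)
    (hβ : IsGeodesicSegment β c b) {γ : ℝ → X} (hγ : IsGeodesicSegment γ a b) {s : ℝ}
    (hs : s ∈ Icc 0 (dist a b)) :
    infDist (γ s) (β '' Icc 0 (dist c b) ∪ α '' Icc 0 (dist c a)) ≤ H₂ + H₁ := by
  obtain ⟨τ, hτ, hτH, hlast⟩ := exists_last_infDist_le hα hβ hH₁.le
  obtain ⟨_, ⟨σ, hσ, rfl⟩, hστ⟩ :=
    hα.isCompact_image.exists_infDist_eq_dist ⟨c, hα.left_mem_image⟩ (β τ)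
  obtain ⟨Γ, hΓ⟩ := hgeo (α σ) (β τ)
  have hgH : dist (α σ) (β τ) ≤ H₁ := by rw [dist_comm, ← hστ]; exact hτH
  have hpq : σ + (τ - dist (α σ) (β τ)) - dist c a ≤ dist c b := by
    linarith [hσ.2, hτ.2, dist_nonneg (x := α σ) (y := β τ)]
  have hC := isQuasiGeodesicOn_detour hα hβ hσ hτ hΓ hgH
    (linear_divergence hgeo hst₁ hH₁ hα hβ hlast)
  have hnear := hst₂.infDist_quasiGeodesic_le hC hpq (detour_left hα hσ.2 dist_nonneg)
    ((detour_right hΓ hτ.2).trans hβ.2.1) hγ hs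
  refine infDist_le_add_of_forall_mem ((nonempty_Icc.2 hpq).image _) hnear ?_
  rintro _ ⟨t, ht, rfl⟩
  exact (infDist_detour_le hσ hτ hΓ ht).trans hgH

end TwoGeodesics

theorem infDist_side_le_of_quasiGeodesicsStable {H₁ H₂ : ℝ} (hgeo : GeodesicSpace X)
    (hst₁ : QuasiGeodesicsStable X 7 1 H₁) (hH₁ : 0 < H₁)
    (hst₂ : QuasiGeodesicsStable X 7 H₁ H₂) {a b c : X} {γab γbc γca : ℝ → X}
    (hab : IsGeodesicSegment γab a b) (hbc : IsGeodesicSegment γbc b c)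
    (hca : IsGeodesicSegment γca c a) {s : ℝ} (hs : s ∈ Icc 0 (dist a b)) :
    infDist (γab s) (γbc '' Icc 0 (dist b c) ∪ γca '' Icc 0 (dist c a)) ≤ H₂ + H₁ := by
  have := infDist_le_add_of_quasiGeodesicsStable hgeo hst₁ hH₁ hst₂ hca hbc.reverse hab hs
  rwa [dist_comm c b, image_comp_const_sub_Icc] at this

end

/-- **Geodesic stability implies Gromov hyperbolicity.** If in a geodesic metric space, for
all `λ ≥ 1` and `S > 0` there is an `H(λ, S) > 0` such that every `(λ, S)`-quasi-geodesic
has image within Hausdorff distance `H(λ, S)` of the image of every geodesic segment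
joining its endpoints, then the space is `δ`-thin-hyperbolic for some `δ ≥ 0`. -/
theorem geodesic_stability_implies_hyperbolic {X : Type*} [MetricSpace X]
    (hgeo : GeodesicSpace X)
    (hstab : ∀ lam S : ℝ, 1 ≤ lam → 0 < S → ∃ H : ℝ, 0 < H ∧
      ∀ (a b : ℝ) (γ : ℝ → X), IsQuasiGeodesicOn lam S γ a b →
        ∀ g : ℝ → X, IsGeodesicSegment g (γ a) (γ b) →
          Metric.hausdorffDist (γ '' Set.Icc a b)
            (g '' Set.Icc 0 (dist (γ a) (γ b))) ≤ H) :
    ∃ δ : ℝ, 0 ≤ δ ∧ ThinTriangles X δ := by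
  obtain ⟨H₁, hH₁, hst₁⟩ := hstab 7 1 (by norm_num) one_pos
  obtain ⟨H₂, hH₂, hst₂⟩ := hstab 7 H₁ (by norm_num) hH₁
  have side := @infDist_side_le_of_quasiGeodesicsStable X _ H₁ H₂ hgeo hst₁ hH₁ hst₂
  refine ⟨H₂ + H₁, by positivity, fun a b c γab γbc γca hab hbc hca => ⟨?_, ?_, ?_⟩⟩
  · exact fun s => side hab hbc hca
  · intro s hs
    rw [union_comm]
    exact side hbc hca hab hs
  · exact fun s => side hca hab hbc
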